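/- Let G be a unipolar graph with clique split whose center H is a maximal clique of G, let G' = (V, E ∪ F) be a minimal triangulation of G, and suppose H is not a maximal clique of G'. Then there is a subset S of the vertices of exactly one peripheral clique H_j such that H ∪ S is a maximal clique H' of G', and the resulting clique split of G' with center H' is feasible with transferable set S. -/

import Mathlib

/-- A clique split of a graph `G`: the vertex set is partitioned into a center clique `H`
and peripheral cliques `P 0, …, P (k-1)` with no edges between distinct peripheral cliques. -/
structure IsCliqueSplit {V : Type*} (G : SimpleGraph V) (H : Set V) {k : ℕ}
    (P : Fin k → Set V) : Prop where
  center_clique : G.IsClique H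
  periph_clique : ∀ i, G.IsClique (P i)
  center_disj : ∀ i, Disjoint H (P i)
  periph_disj : ∀ i j, i ≠ j → Disjoint (P i) (P j)
  covers : H ∪ (⋃ i, P i) = Set.univ
  no_cross : ∀ i j, i ≠ j → ∀ u ∈ P i, ∀ v ∈ P j, ¬ G.Adj u v

/-- A graph is unipolar if it admits a clique split. -/
def Unipolar {V : Type*} (G : SimpleGraph V) : Prop :=
  ∃ (H : Set V) (k : ℕ) (P : Fin k → Set V), IsCliqueSplit G H P

/-- A graph is chordal if it contains no induced cycle on four or more vertices. -/
def Chordal {V : Type*} (G : SimpleGraph V) : Prop :=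
  ∀ n : ℕ, 4 ≤ n → IsEmpty (SimpleGraph.cycleGraph n ↪g G)

/-- `Gp` is a minimal triangulation of `G`: it is a chordal supergraph of `G` on the same
vertex set, and no chordal graph strictly between `G` and `Gp` exists (the set of fill
edges is inclusion-minimal). -/
def IsMinimalTriangulation {V : Type*} (G Gp : SimpleGraph V) : Prop :=
  G ≤ Gp ∧ Chordal Gp ∧ ∀ Gpp : SimpleGraph V, G ≤ Gpp → Gpp ≤ Gp → Chordal Gpp → Gpp = Gp

/-- `S` is a transferable set for the clique split of `Gp` with center `Hp` and peripheral
cliques `P`, with respect to the original graph `G`: `S ⊆ Hp`, for some `i` the set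
`S ∪ P i` is a clique in `G`, and vertices of `S` have no `G`-neighbors in any `P j`, `j ≠ i`. -/
def IsTransferable {V : Type*} (G : SimpleGraph V) (Hp : Set V) {k : ℕ}
    (P : Fin k → Set V) (S : Set V) : Prop :=
  S ⊆ Hp ∧ ∃ i : Fin k, G.IsClique (S ∪ P i) ∧
    ∀ j : Fin k, j ≠ i → ∀ u ∈ S, ∀ v ∈ P j, ¬ G.Adj u v

/-- A clique split of `Gp` with center `Hp` and peripheral cliques `P` is feasible
(with respect to the original graph `G`, the fill edges being the edges of `Gp` not in `G`):
(i) every fill edge either has one endpoint in `Hp` and the other in some `P j`, or both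
endpoints in `Hp`; (ii) if some fill edge has both endpoints in `Hp`, then there is a
transferable set `S ⊆ Hp` such that every such fill edge has one endpoint in `Hp − S` and
the other in `S`. -/
def IsFeasible {V : Type*} (G Gp : SimpleGraph V) (Hp : Set V) {k : ℕ}
    (P : Fin k → Set V) : Prop :=
  (∀ u v : V, Gp.Adj u v → ¬ G.Adj u v →
      (u ∈ Hp ∧ v ∈ Hp) ∨ (u ∈ Hp ∧ ∃ j : Fin k, v ∈ P j) ∨
        (v ∈ Hp ∧ ∃ j : Fin k, u ∈ P j)) ∧
  ((∃ u v : V, Gp.Adj u v ∧ ¬ G.Adj u v ∧ u ∈ Hp ∧ v ∈ Hp) →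
      ∃ S : Set V, IsTransferable G Hp P S ∧
        ∀ u v : V, Gp.Adj u v → ¬ G.Adj u v → u ∈ Hp → v ∈ Hp →
          ((u ∈ S ∧ v ∈ Hp \ S) ∨ (v ∈ S ∧ u ∈ Hp \ S)))

/-- `Hp` is a maximal clique of `Gp`. -/
def IsMaxClique {V : Type*} (Gp : SimpleGraph V) (Hp : Set V) : Prop :=
  Gp.IsClique Hp ∧ ∀ T : Set V, Gp.IsClique T → Hp ⊆ T → T = Hp

/-!
Let `Z` be `Gp` with every edge between two distinct peripheral cliques deleted. `Z` is still
chordal: an induced cycle of length at least four meets the clique `H` in at most two consecutive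
vertices, so its remaining vertices form a path of `Z` and lie in a single peripheral clique; hence
the cycle has no deleted chord and is induced in `Gp` too. By minimality `Z = Gp`, so the clique
split of `G` is one of `Gp`. A maximal clique of `Gp` strictly containing `H` therefore adds to
`H` a set `S` of vertices of a single peripheral clique, and as `H` and `S` are cliques of `G`,
every fill edge inside `H ∪ S` joins `H` to `S`.
-/

open Fin.CommRing in
theorem Fin.natCast_ne_zero_of_pos_of_lt {n a : ℕ} [NeZero n] (h0 : 0 < a) (h : a < n) :
    (a : Fin n) ≠ 0 := by
  rw [Ne, Fin.natCast_eq_zero]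
  exact Nat.not_dvd_of_pos_of_lt h0 h

namespace SimpleGraph

open Fin.CommRing

variable {n : ℕ}

theorem cycleGraph_adj_iff_eq_add_one {u v : Fin (n + 2)} :
    (cycleGraph (n + 2)).Adj u v ↔ u = v + 1 ∨ v = u + 1 := by
  rw [cycleGraph_adj, sub_eq_iff_eq_add, sub_eq_iff_eq_add, add_comm 1 v, add_comm 1 u]

theorem IsClique.exists_subset_pair_of_cycleGraph {A : Set (Fin (n + 4))}
    (hA : (cycleGraph (n + 4)).IsClique A) : ∃ s, A ⊆ {s, s + 1} := by
  rcases A.eq_empty_or_nonempty with rfl | ⟨a, ha⟩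
  · exact ⟨0, Set.empty_subset _⟩
  have near : ∀ b ∈ A, b = a ∨ b = a + 1 ∨ a = b + 1 := fun b hb => by
    rcases eq_or_ne b a with rfl | hne
    · exact .inl rfl
    · exact .inr (cycleGraph_adj_iff_eq_add_one.1 (hA hb ha hne))
  by_cases hsucc : a + 1 ∈ A
  · refine ⟨a, fun b hb => ?_⟩
    rcases near b hb with rfl | rfl | rfl
    · exact .inl rfl
    · exact .inr rfl
    · exfalso
      have hne : b + 1 + 1 ≠ b := fun h =>
        Fin.natCast_ne_zero_of_pos_of_lt (n := n + 4) (a := 2) (by omega) (by omega)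
          (by push_cast; linear_combination h)
      rcases cycleGraph_adj_iff_eq_add_one.1 (hA hsucc hb hne) with h | h
      · exact Fin.natCast_ne_zero_of_pos_of_lt (n := n + 4) (a := 1) (by omega) (by omega)
          (by push_cast; linear_combination h)
      · exact Fin.natCast_ne_zero_of_pos_of_lt (n := n + 4) (a := 3) (by omega) (by omega)
          (by push_cast; linear_combination -h)
  · refine ⟨a - 1, fun b hb => ?_⟩
    rcases near b hb with rfl | rfl | rfl
    · exact .inr (sub_add_cancel b 1).symm
    · exact absurd hb hsucc
    · exact .inl (add_sub_cancel_right b 1).symm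

theorem cycleGraph_imp_of_isClique {A : Set (Fin (n + 4))}
    (hA : (cycleGraph (n + 4)).IsClique A) {Q : Fin (n + 4) → Prop}
    (hQ : ∀ x, x ∉ A → x + 1 ∉ A → (Q x ↔ Q (x + 1))) {x y : Fin (n + 4)}
    (hx : x ∉ A) (hy : y ∉ A) (hQx : Q x) : Q y := by
  -- The arc `s + 2, …, s - 1` avoids `A ⊆ {s, s + 1}`; `s` and `s + 1` are adjacent to its ends.
  obtain ⟨s, hs⟩ := hA.exists_subset_pair_of_cycleGraph
  have avoid : ∀ t : ℕ, t ≤ n + 1 → s + 2 + t ∉ A := by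
    intro t ht hmem
    have h := hs hmem
    simp only [Set.mem_insert_iff, Set.mem_singleton_iff] at h
    rcases h with h | h
    · exact Fin.natCast_ne_zero_of_pos_of_lt (n := n + 4) (a := t + 2) (by omega) (by omega)
        (by push_cast; linear_combination h)
    · exact Fin.natCast_ne_zero_of_pos_of_lt (n := n + 4) (a := t + 1) (by omega) (by omega)
        (by push_cast; linear_combination h)
  have arc : ∀ t : ℕ, t ≤ n + 1 → (Q (s + 2 + t) ↔ Q (s + 2)) := by
    intro t ht
    induction t with
    | zero => simp
    | succ t ih =>
      have hnext : s + 2 + t + 1 ∉ A := by simpa [add_assoc] using avoid (t + 1) ht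
      rw [← ih (by omega), hQ _ (avoid t (by omega)) hnext]
      simp [add_assoc]
  have iff_base : ∀ z ∉ A, Q z ↔ Q (s + 2) := by
    intro z hz
    obtain ⟨t, ht, rfl⟩ : ∃ t : ℕ, t ≤ n + 3 ∧ s + 2 + t = z :=
      ⟨(z - (s + 2)).val, by omega, by rw [Fin.cast_val_eq_self]; ring⟩
    rcases (by omega : t ≤ n + 1 ∨ t = n + 2 ∨ t = n + 3) with ht | rfl | rfl
    · exact arc t ht
    · have hprev :
          s + 2 + ((n + 1 : ℕ) : Fin (n + 4)) + 1 = s + 2 + ((n + 2 : ℕ) : Fin (n + 4)) := by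
        push_cast; ring
      rw [← hprev, ← hQ _ (avoid (n + 1) le_rfl) (hprev ▸ hz)]
      exact arc (n + 1) le_rfl
    · have hnext : s + 2 + ((n + 3 : ℕ) : Fin (n + 4)) + 1 = s + 2 := by
        have hwrap := Fin.natCast_self (n + 4)
        push_cast at hwrap ⊢
        linear_combination hwrap
      rw [hQ _ hz (by rw [hnext]; simpa using avoid 0 (by omega)), hnext]
  exact (iff_base y hy).2 ((iff_base x hx).1 hQx)

theorem IsClique.exists_isMaxClique_superset {V : Type*} {G : SimpleGraph V} {s : Set V}
    (hs : G.IsClique s) : ∃ t, s ⊆ t ∧ IsMaxClique G t := by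
  obtain ⟨t, hst, ht⟩ := zorn_subset_nonempty {t | G.IsClique t}
    (fun c hc hchain _ =>
      ⟨⋃₀ c, hchain.pairwise_sUnion.2 hc, fun _ => Set.subset_sUnion_of_mem⟩)
    s hs
  exact ⟨t, hst, ht.1, fun u hu htu => (ht.2 hu htu).antisymm htu⟩

end SimpleGraph

open SimpleGraph

def crossGraph {V : Type*} {k : ℕ} (P : Fin k → Set V) : SimpleGraph V :=
  SimpleGraph.fromRel fun u v => ∃ i j, i ≠ j ∧ u ∈ P i ∧ v ∈ P j

namespace IsCliqueSplit

variable {V : Type*} {G : SimpleGraph V} {H : Set V} {k : ℕ} {P : Fin k → Set V}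

theorem exists_mem_periph (hsplit : IsCliqueSplit G H P) {v : V} (hv : v ∉ H) :
    ∃ i, v ∈ P i := by
  have : v ∈ H ∪ ⋃ i, P i := hsplit.covers ▸ Set.mem_univ v
  simpa [hv] using this

theorem notMem_center (hsplit : IsCliqueSplit G H P) {v : V} {i : Fin k} (hv : v ∈ P i) :
    v ∉ H :=
  fun h => Set.disjoint_left.1 (hsplit.center_disj i) h hv

theorem eq_of_mem_periph (hsplit : IsCliqueSplit G H P) {v : V} {i j : Fin k} (hi : v ∈ P i)
    (hj : v ∈ P j) : i = j := by
  by_contra hij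
  exact Set.disjoint_left.1 (hsplit.periph_disj i j hij) hi hj

theorem le_sdiff_crossGraph (hsplit : IsCliqueSplit G H P) {Gp : SimpleGraph V} (hle : G ≤ Gp) :
    G ≤ Gp \ crossGraph P := by
  rintro u v huv
  refine ⟨hle huv, fun ⟨_, h⟩ => ?_⟩
  rcases h with ⟨i, j, hij, hu, hv⟩ | ⟨i, j, hij, hv, hu⟩
  · exact hsplit.no_cross i j hij u hu v hv huv
  · exact hsplit.no_cross i j hij v hv u hu huv.symm

theorem not_crossGraph_adj_of_mem_center (hsplit : IsCliqueSplit G H P) {u v : V} (hu : u ∈ H) :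
    ¬ (crossGraph P).Adj u v := by
  rintro ⟨_, ⟨i, j, -, hi, -⟩ | ⟨i, j, -, -, hi⟩⟩ <;> exact hsplit.notMem_center hi hu

theorem mem_periph_of_adj (hsplit : IsCliqueSplit G H P) {Gp : SimpleGraph V} {u v : V}
    (huv : (Gp \ crossGraph P).Adj u v) (hv : v ∉ H) {i : Fin k} (hu : u ∈ P i) :
    v ∈ P i := by
  obtain ⟨j, hj⟩ := hsplit.exists_mem_periph hv
  obtain rfl | hij := eq_or_ne i j
  · exact hj
  · exact absurd ⟨huv.1.ne, .inl ⟨i, j, hij, hu, hj⟩⟩ huv.2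

theorem mem_periph_iff_of_adj (hsplit : IsCliqueSplit G H P) {Gp : SimpleGraph V} {u v : V}
    (huv : (Gp \ crossGraph P).Adj u v) (hu : u ∉ H) (hv : v ∉ H) {i : Fin k} :
    u ∈ P i ↔ v ∈ P i :=
  ⟨hsplit.mem_periph_of_adj huv hv, hsplit.mem_periph_of_adj huv.symm hu⟩

theorem exists_subset_periph (hsplit : IsCliqueSplit G H P) {T : Set V} (hT : G.IsClique T)
    (hne : (T \ H).Nonempty) : ∃ j, T \ H ⊆ P j := by
  obtain ⟨u, hu⟩ := hne
  obtain ⟨j, hj⟩ := hsplit.exists_mem_periph hu.2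
  refine ⟨j, fun v hv => ?_⟩
  obtain ⟨i, hi⟩ := hsplit.exists_mem_periph hv.2
  obtain rfl | hij := eq_or_ne j i
  · exact hi
  obtain rfl | huv := eq_or_ne u v
  · exact absurd (hsplit.eq_of_mem_periph hj hi) hij
  · exact absurd (hT hu.1 hv.1 huv) (hsplit.no_cross j i hij u hj v hi)

theorem union_sdiff (hsplit : IsCliqueSplit G H P) {S : Set V} (hHS : G.IsClique (H ∪ S)) :
    IsCliqueSplit G (H ∪ S) (fun i => P i \ S) where
  center_clique := hHS
  periph_clique i := (hsplit.periph_clique i).subset Set.sdiff_subset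
  center_disj i := Set.disjoint_union_left.2
    ⟨(hsplit.center_disj i).mono_right Set.sdiff_subset, Set.disjoint_sdiff_right⟩
  periph_disj i j hij := (hsplit.periph_disj i j hij).mono Set.sdiff_subset Set.sdiff_subset
  covers := by
    refine Set.eq_univ_of_forall fun v => ?_
    by_cases hv : v ∈ H ∪ S
    · exact .inl hv
    · obtain ⟨i, hi⟩ := hsplit.exists_mem_periph fun h => hv (.inl h)
      exact .inr (Set.mem_iUnion.2 ⟨i, hi, fun h => hv (.inr h)⟩)
  no_cross i j hij u hu v hv := hsplit.no_cross i j hij u hu.1 v hv.1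

theorem isTransferable (hsplit : IsCliqueSplit G H P) {S : Set V} {j : Fin k} (hS : S ⊆ P j) :
    IsTransferable G (H ∪ S) (fun i => P i \ S) S := by
  refine ⟨Set.subset_union_right, j, ?_, fun i hij u hu v hv => ?_⟩
  · rw [Set.union_sdiff_cancel hS]
    exact hsplit.periph_clique j
  · exact hsplit.no_cross j i hij.symm u (hS hu) v hv.1

theorem mem_sdiff_of_not_adj (hsplit : IsCliqueSplit G H P) {S : Set V} {j : Fin k}
    (hS : S ⊆ P j) {u v : V} (hu : u ∈ H ∪ S) (hv : v ∈ H ∪ S) (huv : u ≠ v)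
    (hG : ¬ G.Adj u v) :
    (u ∈ S ∧ v ∈ (H ∪ S) \ S) ∨ (v ∈ S ∧ u ∈ (H ∪ S) \ S) := by
  have notS : ∀ {w}, w ∈ H → w ∉ S := fun hw hwS => hsplit.notMem_center (hS hwS) hw
  rcases hu with hu | hu <;> rcases hv with hv | hv
  · exact absurd (hsplit.center_clique hu hv huv) hG
  · exact .inr ⟨hv, .inl hu, notS hu⟩
  · exact .inl ⟨hu, .inl hv, notS hv⟩
  · exact absurd (hsplit.periph_clique j (hS hu) (hS hv) huv) hG

end IsCliqueSplit

theorem Chordal.sdiff_crossGraph {V : Type*} {G Gp : SimpleGraph V} {H : Set V} {k : ℕ}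
    {P : Fin k → Set V} (hGp : Chordal Gp) (hsplit : IsCliqueSplit G H P) (hle : G ≤ Gp) :
    Chordal (Gp \ crossGraph P) := by
  intro n hn
  obtain ⟨n, rfl⟩ : ∃ m, n = m + 4 := ⟨n - 4, by omega⟩
  refine ⟨fun f => ?_⟩
  have hA : (cycleGraph (n + 4)).IsClique (f ⁻¹' H) := fun x hx y hy hxy =>
    f.map_rel_iff.1 ⟨hle (hsplit.center_clique hx hy (f.injective.ne hxy)),
      hsplit.not_crossGraph_adj_of_mem_center hx⟩
  have same : ∀ p q i j, f p ∈ P i → f q ∈ P j → i = j := fun p q i j hp hq =>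
    hsplit.eq_of_mem_periph (cycleGraph_imp_of_isClique hA (Q := fun z => f z ∈ P i)
      (fun x hx hx1 => hsplit.mem_periph_iff_of_adj
        (f.map_rel_iff.2 (cycleGraph_adj_iff_eq_add_one.2 (.inr rfl))) hx hx1)
      (hsplit.notMem_center hp) (hsplit.notMem_center hq) hp) hq
  have no_chord : ∀ p q, ¬ (crossGraph P).Adj (f p) (f q) := by
    rintro p q ⟨_, ⟨i, j, hij, hp, hq⟩ | ⟨i, j, hij, hq, hp⟩⟩
    · exact hij (same p q i j hp hq)
    · exact hij (same q p i j hq hp)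
  exact (hGp (n + 4) hn).false
    ⟨f.toEmbedding, fun {p q} => ⟨fun h => f.map_rel_iff.1 ⟨h, no_chord p q⟩,
      fun h => (f.map_rel_iff.2 h).1⟩⟩

theorem IsMinimalTriangulation.isCliqueSplit {V : Type*} {G Gp : SimpleGraph V}
    (hmt : IsMinimalTriangulation G Gp) {H : Set V} {k : ℕ} {P : Fin k → Set V}
    (hsplit : IsCliqueSplit G H P) : IsCliqueSplit Gp H P := by
  obtain ⟨hle, hchordal, hmin⟩ := hmt
  have hZ : Gp \ crossGraph P = Gp :=
    hmin _ (hsplit.le_sdiff_crossGraph hle) sdiff_le (hchordal.sdiff_crossGraph hsplit hle)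
  refine { hsplit with
    center_clique := hsplit.center_clique.mono hle
    periph_clique := fun i => (hsplit.periph_clique i).mono hle
    no_cross := fun i j hij u hu v hv huv => ?_ }
  rw [← hZ] at huv
  exact huv.2 ⟨huv.1.ne, .inl ⟨i, j, hij, hu, hv⟩⟩

theorem center_extends_to_feasible_split_general {V : Type*} (G Gp : SimpleGraph V)
    (hmt : IsMinimalTriangulation G Gp)
    (H : Set V) {k : ℕ} (P : Fin k → Set V) (hsplit : IsCliqueSplit G H P)
    (hnotmax : ¬ IsMaxClique Gp H) :
    ∃ (j : Fin k) (S : Set V), S.Nonempty ∧ S ⊆ P j ∧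
      IsMaxClique Gp (H ∪ S) ∧
      IsCliqueSplit Gp (H ∪ S) (fun i => P i \ S) ∧
      IsTransferable G (H ∪ S) (fun i => P i \ S) S ∧
      (∀ u v : V, Gp.Adj u v → ¬ G.Adj u v → u ∈ H ∪ S → v ∈ H ∪ S →
        ((u ∈ S ∧ v ∈ (H ∪ S) \ S) ∨ (v ∈ S ∧ u ∈ (H ∪ S) \ S))) := by
  have hsplitGp := hmt.isCliqueSplit hsplit
  obtain ⟨Hp, hHHp, hHp⟩ := hsplitGp.center_clique.exists_isMaxClique_superset
  have hS : (Hp \ H).Nonempty :=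
    Set.sdiff_nonempty.2 fun hsub => hnotmax (hsub.antisymm hHHp ▸ hHp)
  obtain ⟨j, hSj⟩ := hsplitGp.exists_subset_periph hHp.1 hS
  have hHS : H ∪ (Hp \ H) = Hp := Set.union_sdiff_cancel hHHp
  refine ⟨j, Hp \ H, hS, hSj, by rwa [hHS], hsplitGp.union_sdiff (by rw [hHS]; exact hHp.1),
    hsplit.isTransferable hSj, fun u v hGp hG hu hv => ?_⟩
  exact hsplit.mem_sdiff_of_not_adj hSj hu hv hGp.ne hG

/-- Let `G` be unipolar with a clique split whose center `H` is a maximal clique of `G`,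
let `Gp` be a minimal triangulation of `G`, and suppose `H` is not a maximal clique of
`Gp`. Then there is a nonempty subset `S` of the vertices of exactly one peripheral
clique `P j` such that `H ∪ S` is a maximal clique of `Gp`, and the resulting clique
split of `Gp` with center `H ∪ S` (and peripheral cliques `P i \ S`) is feasible with
transferable set `S`. -/
theorem center_extends_to_feasible_split {V : Type*} (G Gp : SimpleGraph V)
    (hmt : IsMinimalTriangulation G Gp)
    (H : Set V) {k : ℕ} (P : Fin k → Set V) (hsplit : IsCliqueSplit G H P)
    (hmax : IsMaxClique G H) (hnotmax : ¬ IsMaxClique Gp H) :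
    ∃ (j : Fin k) (S : Set V), S.Nonempty ∧ S ⊆ P j ∧
      IsMaxClique Gp (H ∪ S) ∧
      IsCliqueSplit Gp (H ∪ S) (fun i => P i \ S) ∧
      IsTransferable G (H ∪ S) (fun i => P i \ S) S ∧
      (∀ u v : V, Gp.Adj u v → ¬ G.Adj u v → u ∈ H ∪ S → v ∈ H ∪ S →
        ((u ∈ S ∧ v ∈ (H ∪ S) \ S) ∨ (v ∈ S ∧ u ∈ (H ∪ S) \ S))) :=
  center_extends_to_feasible_split_general G Gp hmt H P hsplit hnotmax
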